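/- arXiv:1206.5990 — 4 statements merged into one kernel-verified Lean document; each statement's English description precedes it below -/
import Mathlib

section
/- For γ > 1/2, k ∈ ℝ, and t ≥ 1, the integral J(t,k) = ∫_{-∞}^{∞} (1+s²)^{-1/2} · (t^γ + [1 + (s - kt)²]^{γ/2})^{-1} ds satisfies t^{γ-1} J(t,k) → 0 as t → ∞, uniformly in k ∈ ℝ. -/
open Filter MeasureTheory

private lemma sq_rpow_half' (x γ : ℝ) : (x ^ 2) ^ (γ / 2) = |x| ^ γ := by
  rw [← sq_abs, ← Real.rpow_natCast |x| 2, ← Real.rpow_mul (abs_nonneg x)]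
  norm_num
  rw [show (2:ℝ) * (γ / 2) = γ by ring]

private lemma rpow_sq' {x : ℝ} (hx : 0 ≤ x) (p : ℝ) : (x ^ p) ^ 2 = x ^ (p * 2) := by
  rw [← Real.rpow_natCast (x ^ p) 2, ← Real.rpow_mul hx]
  norm_num

private lemma aux_integrable (γ : ℝ) (hγ : 1 / 2 < γ) :
    Integrable (fun v : ℝ => (1 + v ^ 2) ^ (-γ)) := by
  have h := integrable_rpow_neg_one_add_norm_sq (E := ℝ) (μ := volume) (r := 2 * γ)
    (by simp [Module.finrank_self]; linarith)
  have he : -(2 * γ) / 2 = -γ := by ring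
  rw [he] at h
  simpa [Real.norm_eq_abs, sq_abs] using h

set_option maxHeartbeats 1000000 in
/-- For `γ > 1/2`, `t^{γ-1} ∫ (1+s²)^{-1/2} (t^γ + (1+(s-kt)²)^{γ/2})⁻¹ ds → 0`
as `t → ∞`, uniformly in `k ∈ ℝ`. -/
theorem key_integral_estimate (γ : ℝ) (hγ : 1 / 2 < γ) :
    ∀ ε > (0:ℝ), ∃ T : ℝ, 1 ≤ T ∧ ∀ t ≥ T, ∀ k : ℝ,
      t ^ (γ - 1) *
        (∫ s : ℝ, (1 + s ^ 2) ^ (-(1:ℝ)/2) *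
          (t ^ γ + (1 + (s - k * t) ^ 2) ^ (γ / 2))⁻¹) < ε := by
  intro ε hε
  have hγ0 : 0 < γ := by linarith
  set Cγ : ℝ := ∫ v : ℝ, ((1:ℝ) + v ^ 2) ^ (-γ) with hCγdef
  set P : ℝ := ∫ s : ℝ, ((1:ℝ) + s ^ 2)⁻¹ with hPdef
  have hCγ0 : 0 ≤ Cγ := integral_nonneg fun v => Real.rpow_nonneg (by positivity) _
  have hP0 : 0 ≤ P := integral_nonneg fun s => by positivity
  set K : ℝ := (P + 2 ^ γ * Cγ) / 2 with hKdef
  have hK0 : 0 ≤ K := by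
    have : (0:ℝ) ≤ 2 ^ γ := Real.rpow_nonneg (by norm_num) _
    have := mul_nonneg this hCγ0
    rw [hKdef]; linarith
  refine ⟨max 1 ((K / ε) ^ 2 + 1), le_max_left _ _, fun t ht k => ?_⟩
  have ht1 : (1:ℝ) ≤ t := le_trans (le_max_left _ _) ht
  have ht0 : (0:ℝ) < t := by linarith
  -- pieces of the dominating function
  set a : ℝ := t ^ ((1:ℝ)/2 - γ) with hadef
  set b : ℝ := t ^ (γ - (1:ℝ)/2) with hbdef
  have ha : 0 < a := Real.rpow_pos_of_pos ht0 _
  have hb : 0 < b := Real.rpow_pos_of_pos ht0 _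
  have hab : a⁻¹ = b := by
    rw [hadef, hbdef, show γ - (1:ℝ)/2 = -((1:ℝ)/2 - γ) by ring, Real.rpow_neg ht0.le]
  -- integrability of the pieces
  have hI1 : Integrable (fun s : ℝ => ((1:ℝ) + s ^ 2)⁻¹) := integrable_inv_one_add_sq
  have hcont2 : Continuous fun u : ℝ => (t ^ 2 + u ^ 2) ^ (-γ) := by
    refine Continuous.rpow_const (by continuity) fun x => Or.inl ?_
    positivity
  have hI2' : Integrable (fun u : ℝ => (t ^ 2 + u ^ 2) ^ (-γ)) := by
    refine (aux_integrable γ hγ).mono' hcont2.aestronglyMeasurable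
      (Eventually.of_forall fun u => ?_)
    rw [Real.norm_eq_abs, abs_of_nonneg (Real.rpow_nonneg (by positivity) _)]
    exact Real.rpow_le_rpow_of_nonpos (by positivity)
      (by nlinarith) (by linarith)
  have hI2 : Integrable (fun s : ℝ => (t ^ 2 + (s - k * t) ^ 2) ^ (-γ)) :=
    hI2'.comp_sub_right (k * t)
  -- the dominating function
  set D : ℝ → ℝ := fun s =>
    (a * ((1:ℝ) + s ^ 2)⁻¹ + b * (2 ^ γ * (t ^ 2 + (s - k * t) ^ 2) ^ (-γ))) / 2 with hDdef
  have hDint : Integrable D := (((hI1.const_mul a).add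
    ((hI2.const_mul ((2:ℝ) ^ γ)).const_mul b)).div_const 2)
  -- pointwise bound
  have ptwise : ∀ s : ℝ,
      (1 + s ^ 2) ^ (-(1:ℝ)/2) * (t ^ γ + (1 + (s - k * t) ^ 2) ^ (γ / 2))⁻¹ ≤ D s := by
    intro s
    set u : ℝ := s - k * t with hu
    set f : ℝ := (1 + s ^ 2) ^ (-(1:ℝ)/2) with hf
    set X : ℝ := t ^ γ + (1 + u ^ 2) ^ (γ / 2) with hX
    have hXpos : 0 < X :=
      add_pos (Real.rpow_pos_of_pos ht0 _) (Real.rpow_pos_of_pos (by positivity) _)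
    set g : ℝ := X⁻¹ with hg
    have hf0 : 0 ≤ f := Real.rpow_nonneg (by positivity) _
    have hg0 : 0 ≤ g := inv_nonneg.mpr hXpos.le
    -- f^2 = (1+s^2)⁻¹
    have hf2 : f ^ 2 = ((1:ℝ) + s ^ 2)⁻¹ := by
      rw [hf, rpow_sq' (by positivity : (0:ℝ) ≤ 1 + s ^ 2),
        show (-(1:ℝ)/2 * 2 : ℝ) = -1 by norm_num, Real.rpow_neg_one]
    -- g^2 ≤ 2^γ * (t² + u²)^(-γ)
    have hg2 : g ^ 2 ≤ 2 ^ γ * (t ^ 2 + u ^ 2) ^ (-γ) := by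
      set B : ℝ := (t ^ 2 + u ^ 2) ^ (γ / 2) with hB
      have hBpos : 0 < B := Real.rpow_pos_of_pos (by positivity) _
      have key : B ≤ 2 ^ (γ / 2) * X := by
        have h1 : t ^ 2 + u ^ 2 ≤ 2 * max (t ^ 2) (u ^ 2) := by
          rcases le_total (t ^ 2) (u ^ 2) with h | h
          · rw [max_eq_right h]; linarith
          · rw [max_eq_left h]; linarith
        have h2 : B ≤ (2 * max (t ^ 2) (u ^ 2)) ^ (γ / 2) :=
          Real.rpow_le_rpow (by positivity) h1 (by linarith)
        have h3 : (2 * max (t ^ 2) (u ^ 2)) ^ (γ / 2)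
            = 2 ^ (γ / 2) * (max (t ^ 2) (u ^ 2)) ^ (γ / 2) :=
          Real.mul_rpow (by norm_num) (le_max_of_le_left (by positivity))
        have h4 : (max (t ^ 2) (u ^ 2)) ^ (γ / 2) ≤ X := by
          have htg : (t ^ 2) ^ (γ / 2) = t ^ γ := by
            rw [sq_rpow_half', abs_of_pos ht0]
          have hug : (u ^ 2) ^ (γ / 2) ≤ (1 + u ^ 2) ^ (γ / 2) :=
            Real.rpow_le_rpow (by positivity) (by linarith) (by linarith)
          rcases max_cases (t ^ 2) (u ^ 2) with ⟨hm, _⟩ | ⟨hm, _⟩ <;> rw [hm, hX]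
          · rw [htg]
            have : (0:ℝ) ≤ (1 + u ^ 2) ^ (γ / 2) := Real.rpow_nonneg (by positivity) _
            linarith
          · have : (0:ℝ) < t ^ γ := Real.rpow_pos_of_pos ht0 _
            linarith
        calc B ≤ 2 ^ (γ / 2) * (max (t ^ 2) (u ^ 2)) ^ (γ / 2) := h2.trans_eq h3
          _ ≤ 2 ^ (γ / 2) * X := by
              have : (0:ℝ) ≤ 2 ^ (γ / 2) := Real.rpow_nonneg (by norm_num) _
              exact mul_le_mul_of_nonneg_left h4 this
      -- square the inequality and invert
      have hBsq : B ^ 2 = (t ^ 2 + u ^ 2) ^ γ := by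
        rw [hB, rpow_sq' (by positivity : (0:ℝ) ≤ t ^ 2 + u ^ 2)]
        norm_num
      have h2sq : ((2:ℝ) ^ (γ / 2)) ^ 2 = 2 ^ γ := by
        rw [rpow_sq' (by norm_num : (0:ℝ) ≤ 2)]
        norm_num
      have hB2le : B ^ 2 ≤ 2 ^ γ * X ^ 2 := by
        have h := pow_le_pow_left₀ hBpos.le key 2
        rwa [mul_pow, h2sq] at h
      have hginv : g ^ 2 = (X ^ 2)⁻¹ := by rw [hg]; rw [inv_pow]
      rw [hginv, Real.rpow_neg (by positivity), ← hBsq]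
      rw [inv_eq_one_div, inv_eq_one_div, mul_one_div,
        div_le_div_iff₀ (by positivity) (by positivity)]
      linarith [hB2le]
    -- AM-GM
    have amgm : f * g ≤ (a * f ^ 2 + a⁻¹ * g ^ 2) / 2 := by
      have hrw : a * f ^ 2 + a⁻¹ * g ^ 2 - 2 * (f * g) = a⁻¹ * (a * f - g) ^ 2 := by
        field_simp
        ring
      have h := mul_nonneg (inv_pos.mpr ha).le (sq_nonneg (a * f - g))
      rw [← hrw] at h
      linarith
    calc f * g ≤ (a * f ^ 2 + a⁻¹ * g ^ 2) / 2 := amgm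
      _ ≤ D s := by
        rw [hDdef, hf2, hab]
        have := mul_le_mul_of_nonneg_left hg2 hb.le
        simp only []
        linarith
  -- bound the integral
  have hnn : ∀ s : ℝ,
      0 ≤ (1 + s ^ 2) ^ (-(1:ℝ)/2) * (t ^ γ + (1 + (s - k * t) ^ 2) ^ (γ / 2))⁻¹ := by
    intro s
    have hXpos : 0 < t ^ γ + (1 + (s - k * t) ^ 2) ^ (γ / 2) :=
      add_pos (Real.rpow_pos_of_pos ht0 _) (Real.rpow_pos_of_pos (by positivity) _)
    exact mul_nonneg (Real.rpow_nonneg (by positivity) _) (inv_nonneg.mpr hXpos.le)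
  have hmono : (∫ s : ℝ, (1 + s ^ 2) ^ (-(1:ℝ)/2) *
      (t ^ γ + (1 + (s - k * t) ^ 2) ^ (γ / 2))⁻¹) ≤ ∫ s : ℝ, D s :=
    integral_mono_of_nonneg (Eventually.of_forall hnn) hDint (Eventually.of_forall ptwise)
  -- compute ∫ D
  have hshift : (∫ s : ℝ, (t ^ 2 + (s - k * t) ^ 2) ^ (-γ)) =
      ∫ u : ℝ, (t ^ 2 + u ^ 2) ^ (-γ) :=
    integral_sub_right_eq_self (fun u : ℝ => (t ^ 2 + u ^ 2) ^ (-γ)) (k * t)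
  have hscale : (∫ u : ℝ, (t ^ 2 + u ^ 2) ^ (-γ)) = t ^ (1 - 2 * γ) * Cγ := by
    have hpt : ∀ u : ℝ, (t ^ 2 + u ^ 2) ^ (-γ)
        = t ^ (-(2:ℝ) * γ) * ((1:ℝ) + (t⁻¹ * u) ^ 2) ^ (-γ) := by
      intro u
      have hsplit : t ^ 2 + u ^ 2 = t ^ 2 * ((1:ℝ) + (t⁻¹ * u) ^ 2) := by
        field_simp
      rw [hsplit, Real.mul_rpow (by positivity) (by positivity)]
      congr 1
      rw [← Real.rpow_natCast t 2, ← Real.rpow_mul ht0.le]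
      norm_num
    simp only [hpt]
    rw [integral_const_mul]
    have hcomp : (∫ u : ℝ, ((1:ℝ) + (t⁻¹ * u) ^ 2) ^ (-γ)) = |t| • Cγ :=
      Measure.integral_comp_inv_mul_left (fun v : ℝ => ((1:ℝ) + v ^ 2) ^ (-γ)) t
    rw [hcomp, abs_of_pos ht0, smul_eq_mul, ← mul_assoc]
    congr 1
    rw [show (1:ℝ) - 2 * γ = -(2:ℝ) * γ + 1 by ring, Real.rpow_add ht0, Real.rpow_one]
  have hDval : (∫ s : ℝ, D s)
      = (a * P + b * (2 ^ γ * (t ^ (1 - 2 * γ) * Cγ))) / 2 := by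
    rw [hDdef]
    simp only []
    rw [integral_div, integral_add (hI1.const_mul a) ((hI2.const_mul _).const_mul b),
      integral_const_mul, integral_const_mul, integral_const_mul, hshift, hscale, hPdef]
  have e1 : t ^ (γ - 1) * a = t ^ (-(1:ℝ)/2) := by
    rw [hadef, ← Real.rpow_add ht0]
    congr 1
    ring
  have e2 : t ^ (γ - 1) * (b * t ^ (1 - 2 * γ)) = t ^ (-(1:ℝ)/2) := by
    rw [hbdef, ← Real.rpow_add ht0, ← Real.rpow_add ht0]
    congr 1
    ring
  have hfinal : t ^ (γ - 1) * (∫ s : ℝ, D s) = t ^ (-(1:ℝ)/2) * K := by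
    rw [hDval, hKdef]
    linear_combination (P / 2) * e1 + (2 ^ γ * Cγ / 2) * e2
  have hmul : t ^ (γ - 1) *
      (∫ s : ℝ, (1 + s ^ 2) ^ (-(1:ℝ)/2) *
        (t ^ γ + (1 + (s - k * t) ^ 2) ^ (γ / 2))⁻¹) ≤ t ^ (-(1:ℝ)/2) * K := by
    calc t ^ (γ - 1) *
        (∫ s : ℝ, (1 + s ^ 2) ^ (-(1:ℝ)/2) *
          (t ^ γ + (1 + (s - k * t) ^ 2) ^ (γ / 2))⁻¹)
        ≤ t ^ (γ - 1) * ∫ s : ℝ, D s :=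
          mul_le_mul_of_nonneg_left hmono (Real.rpow_nonneg ht0.le _)
      _ = t ^ (-(1:ℝ)/2) * K := hfinal
  have hrt : (0:ℝ) < t ^ ((1:ℝ)/2) := Real.rpow_pos_of_pos ht0 _
  have hKε : K < t ^ ((1:ℝ)/2) * ε := by
    have h5 : (K / ε) ^ 2 < t := lt_of_lt_of_le (lt_add_one _) (le_trans (le_max_right _ _) ht)
    have h6 : ((K / ε) ^ 2) ^ ((1:ℝ)/2) < t ^ ((1:ℝ)/2) :=
      Real.rpow_lt_rpow (by positivity) h5 (by norm_num)
    have h7 : ((K / ε) ^ 2) ^ ((1:ℝ)/2) = K / ε := by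
      rw [sq_rpow_half' (K / ε) 1, Real.rpow_one, abs_of_nonneg (div_nonneg hK0 hε.le)]
    rw [h7] at h6
    calc K = K / ε * ε := by field_simp
      _ < t ^ ((1:ℝ)/2) * ε := mul_lt_mul_of_pos_right h6 hε
  have hlast : t ^ (-(1:ℝ)/2) * K < ε := by
    rw [show -(1:ℝ)/2 = -((1:ℝ)/2) by ring, Real.rpow_neg ht0.le, mul_comm,
      ← div_eq_mul_inv, div_lt_iff₀ hrt]
    linarith [hKε]
  linarith [hmul, hlast]
end

section
/- For γ > 1/2, the integral ∫_{-∞}^{∞} (1 + t² y²)^{-1/2} (1 + |y - k|^γ)^{-1} dy tends to 0 as t → ∞, uniformly with respect to k ∈ ℝ. -/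
/-!
By Cauchy–Schwarz the integral is at most `‖(1 + t²y²)^{-1/2}‖₂ · ‖(1 + |y - k|^γ)⁻¹‖₂`.
The first factor is `√(π / t)` by rescaling `∫ (1 + x²)⁻¹ = π`; the second does not depend on `k`
by translation invariance, and is finite because `(1 + |y|^γ)⁻² ≤ (1 + |y|^{2γ})⁻¹` with `2γ > 1`.
-/

open Filter MeasureTheory Real

theorem integral_mul_le_sqrt_mul_sqrt {α : Type*} [MeasurableSpace α] {μ : Measure α}
    {f g : α → ℝ} (hf : MemLp f 2 μ) (hg : MemLp g 2 μ) :
    ∫ a, f a * g a ∂μ ≤ √(∫ a, f a ^ 2 ∂μ) * √(∫ a, g a ^ 2 ∂μ) := by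
  have hfg : Integrable (fun a => f a * g a) μ := hf.integrable_mul hg
  calc ∫ a, f a * g a ∂μ ≤ ∫ a, ‖f a‖ * ‖g a‖ ∂μ :=
        integral_mono hfg (by simpa only [norm_mul] using hfg.norm) fun a => by
          rw [norm_eq_abs, norm_eq_abs, ← abs_mul]; exact le_abs_self _
    _ ≤ (∫ a, ‖f a‖ ^ (2 : ℝ) ∂μ) ^ (1 / (2 : ℝ)) * (∫ a, ‖g a‖ ^ (2 : ℝ) ∂μ) ^ (1 / (2 : ℝ)) :=
        integral_mul_norm_le_Lp_mul_Lq .two_two (by simpa using hf) (by simpa using hg)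
    _ = √(∫ a, f a ^ 2 ∂μ) * √(∫ a, g a ^ 2 ∂μ) := by
        simp only [sqrt_eq_rpow, rpow_two, norm_eq_abs, sq_abs]

lemma one_add_abs_rpow_le (y : ℝ) {p : ℝ} (hp : 1 ≤ p) :
    (1 + |y|) ^ p ≤ 2 ^ (p - 1) * (1 + |y| ^ p) := by
  have := NNReal.rpow_add_le_mul_rpow_add_rpow 1 ‖y‖₊ hp
  rw [← NNReal.coe_le_coe] at this
  simpa using this

lemma integrable_inv_one_add_abs_rpow {p : ℝ} (hp : 1 < p) :
    Integrable fun y : ℝ => (1 + |y| ^ p)⁻¹ := by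
  have hdom : Integrable fun y : ℝ => 2 ^ (p - 1) * (1 + ‖y‖) ^ (-p) :=
    (integrable_one_add_norm (by simpa using hp)).const_mul _
  refine hdom.mono' (by fun_prop : Measurable _).aestronglyMeasurable
    (Eventually.of_forall fun y => ?_)
  rw [norm_inv, norm_of_nonneg (by positivity), norm_eq_abs, rpow_neg (by positivity),
    ← div_eq_mul_inv, le_div_iff₀ (by positivity), inv_mul_le_iff₀ (by positivity), mul_comm]
  exact one_add_abs_rpow_le y hp.le

lemma inv_one_add_rpow_sq_le {x : ℝ} (hx : 0 ≤ x) (γ : ℝ) :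
    (1 + x ^ γ)⁻¹ ^ 2 ≤ (1 + x ^ (2 * γ))⁻¹ := by
  rw [inv_pow, mul_comm, rpow_mul hx, rpow_two]
  gcongr
  nlinarith [rpow_nonneg hx γ]

lemma integrable_inv_one_add_abs_rpow_sq {γ : ℝ} (hγ : 1 / 2 < γ) :
    Integrable fun y : ℝ => (1 + |y| ^ γ)⁻¹ ^ 2 := by
  refine (integrable_inv_one_add_abs_rpow (p := 2 * γ) (by linarith)).mono'
    (by fun_prop : Measurable _).aestronglyMeasurable (Eventually.of_forall fun y => ?_)
  rw [norm_of_nonneg (by positivity)]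
  exact inv_one_add_rpow_sq_le (abs_nonneg y) γ

lemma sq_rpow_neg_half_one_add_sq (t y : ℝ) :
    ((1 + t ^ 2 * y ^ 2) ^ (-(1 : ℝ) / 2)) ^ 2 = (1 + (t * y) ^ 2)⁻¹ := by
  rw [← rpow_natCast, ← rpow_mul (by positivity), mul_pow]
  norm_num [rpow_neg_one]

-- Also true at `t = 0`, where the integrand is not integrable and both sides are `0`.
lemma integral_inv_one_add_mul_sq (t : ℝ) : ∫ y : ℝ, (1 + (t * y) ^ 2)⁻¹ = π / |t| := by
  rw [Measure.integral_comp_mul_left (fun x => (1 + x ^ 2)⁻¹), integral_univ_inv_one_add_sq,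
    smul_eq_mul, abs_inv, inv_mul_eq_div]

theorem integral_rpow_neg_half_mul_inv_one_add_rpow_le {γ : ℝ} (hγ : 1 / 2 < γ) {t : ℝ}
    (ht : t ≠ 0) (k : ℝ) :
    ∫ y : ℝ, (1 + t ^ 2 * y ^ 2) ^ (-(1 : ℝ) / 2) * (1 + |y - k| ^ γ)⁻¹ ≤
      √(π / |t| * ∫ y : ℝ, (1 + |y| ^ γ)⁻¹ ^ 2) := by
  have hf : MemLp (fun y : ℝ => (1 + t ^ 2 * y ^ 2) ^ (-(1 : ℝ) / 2)) 2 := by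
    refine (memLp_two_iff_integrable_sq (by fun_prop : Measurable _).aestronglyMeasurable).2 ?_
    simp_rw [sq_rpow_neg_half_one_add_sq]
    exact (integrable_comp_mul_left_iff (fun x => (1 + x ^ 2)⁻¹) ht).2 integrable_inv_one_add_sq
  have hg : MemLp (fun y : ℝ => (1 + |y - k| ^ γ)⁻¹) 2 :=
    (memLp_two_iff_integrable_sq (by fun_prop : Measurable _).aestronglyMeasurable).2
      ((integrable_inv_one_add_abs_rpow_sq hγ).comp_sub_right k)
  refine (integral_mul_le_sqrt_mul_sqrt hf hg).trans_eq ?_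
  rw [sqrt_mul (by positivity)]
  simp_rw [sq_rpow_neg_half_one_add_sq, integral_inv_one_add_mul_sq]
  rw [integral_sub_right_eq_self (fun y => (1 + |y| ^ γ)⁻¹ ^ 2) k]

/-- For `γ > 1/2`, `∫ (1 + t²y²)^{-1/2} (1 + |y-k|^γ)⁻¹ dy → 0` as `t → ∞`,
uniformly in `k ∈ ℝ`. -/
theorem rescaled_integral_tendsto_zero_uniformly (γ : ℝ) (hγ : 1 / 2 < γ) :
    ∀ ε > (0:ℝ), ∃ T : ℝ, ∀ t ≥ T, ∀ k : ℝ,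
      (∫ y : ℝ, (1 + t ^ 2 * y ^ 2) ^ (-(1:ℝ)/2) * (1 + |y - k| ^ γ)⁻¹) < ε := by
  intro ε hε
  set C := ∫ y : ℝ, (1 + |y| ^ γ)⁻¹ ^ 2
  have hC : 0 ≤ C := integral_nonneg fun y => by positivity
  refine ⟨π * C / ε ^ 2 + 1, fun t ht k => ?_⟩
  have ht0 : 0 < t := lt_of_lt_of_le (by positivity) ht
  refine (integral_rpow_neg_half_mul_inv_one_add_rpow_le hγ ht0.ne' k).trans_lt ?_
  rw [abs_of_pos ht0, sqrt_lt' hε, div_mul_eq_mul_div, div_lt_iff₀ ht0, mul_comm _ t]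
  exact (div_lt_iff₀ (by positivity)).1 (by linarith)
end

section
/- Let G : ℂ → H be continuous on the closed half-plane Re p ≥ 0 with ‖G(p)‖ ≤ C/(1 + |p|^γ) for some γ > 1/2, and suppose G(q/t - ik) → G(-ik) as t → ∞ for each fixed q on the line Re q = 1. Then lim_{t→∞} (1/(2πi)) ∫_{1-i∞}^{1+i∞} G(q/t - ik) e^q q^{-2} dq = G(-ik). -/
open Filter Complex Real
open MeasureTheory Set
open scoped Topology FourierTransform

/-!
For `t > 0` the points `(1 + is)/t - ik` lie in the closed right half-plane, where `‖G‖ ≤ C`, so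
the integrand is dominated by `C e / (1 + s²)` and dominated convergence sends the integral to
`(∫ e^(1+is) (1+is)⁻² ds) • G(-ik)`. That weight integral equals `2π`: it is Fourier inversion at
the point `1` for `t ↦ t e^(-t)` on `t > 0` (zero elsewhere), whose Fourier transform is
`(1 + 2πiξ)⁻²`.
-/

lemma norm_cexp_neg_mul_ofReal (c : ℂ) (t : ℝ) :
    ‖cexp (-(c * t))‖ = rexp (-(c.re * t)) := by
  simp [Complex.norm_exp]

lemma integrableOn_ofReal_mul_cexp_neg_mul_Ioi {c : ℂ} (hc : 0 < c.re) :
    IntegrableOn (fun t : ℝ => (t : ℂ) * cexp (-(c * t))) (Ioi 0) := by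
  have hdom : IntegrableOn (fun t : ℝ => t * rexp (-c.re * t)) (Ioi 0) := by
    simpa using integrableOn_rpow_mul_exp_neg_mul_rpow (by norm_num : (-1 : ℝ) < 1) one_pos hc
  refine hdom.mono' (by fun_prop) ((ae_restrict_iff' measurableSet_Ioi).2 (ae_of_all _ ?_))
  intro t (ht : 0 < t)
  simp [norm_cexp_neg_mul_ofReal, abs_of_pos ht]

lemma tendsto_ofReal_mul_cexp_neg_mul_atTop {c : ℂ} (hc : 0 < c.re) :
    Tendsto (fun t : ℝ => (t : ℂ) * cexp (-(c * t))) atTop (𝓝 0) := by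
  rw [tendsto_zero_iff_norm_tendsto_zero]
  refine (tendsto_rpow_mul_exp_neg_mul_atTop_nhds_zero 1 _ hc).congr' ?_
  filter_upwards [eventually_ge_atTop 0] with t ht
  simp [norm_cexp_neg_mul_ofReal, abs_of_nonneg ht]

lemma tendsto_cexp_neg_mul_atTop {c : ℂ} (hc : 0 < c.re) :
    Tendsto (fun t : ℝ => cexp (-(c * t))) atTop (𝓝 0) := by
  rw [tendsto_zero_iff_norm_tendsto_zero]
  simp only [norm_cexp_neg_mul_ofReal]
  exact tendsto_exp_neg_atTop_nhds_zero.comp (tendsto_id.const_mul_atTop hc)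

lemma integral_ofReal_mul_cexp_neg_mul_Ioi {c : ℂ} (hc : 0 < c.re) :
    ∫ t in Ioi (0 : ℝ), (t : ℂ) * cexp (-(c * t)) = 1 / c ^ 2 := by
  have hc0 : c ≠ 0 := fun h => by simp [h] at hc
  set F : ℝ → ℂ := fun t => -((c * t + 1) / c ^ 2) * cexp (-(c * t))
  have hF : ∀ t : ℝ, HasDerivAt F (t * cexp (-(c * t))) t := fun t => by
    have hlin : HasDerivAt (fun z : ℂ => c * z) c t := by
      simpa using (hasDerivAt_id (t : ℂ)).const_mul c
    have hG : HasDerivAt (fun z : ℂ => -((c * z + 1) / c ^ 2) * cexp (-(c * z)))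
        (t * cexp (-(c * t))) t := by
      refine (((hlin.add_const 1).div_const (c ^ 2)).fun_neg.fun_mul
        hlin.fun_neg.cexp).congr_deriv ?_
      field_simp
      ring
    exact hG.comp_ofReal
  have hF_top : Tendsto F atTop (𝓝 0) := by
    have := ((tendsto_ofReal_mul_cexp_neg_mul_atTop hc).const_mul (-(1 / c))).add
      ((tendsto_cexp_neg_mul_atTop hc).const_mul (-(1 / c ^ 2)))
    simp only [mul_zero, add_zero] at this
    refine this.congr fun t => ?_
    simp only [F]
    field_simp
    ring
  rw [integral_Ioi_of_hasDerivAt_of_tendsto (hF 0).continuousAt.continuousWithinAt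
    (fun t _ => hF t) (integrableOn_ofReal_mul_cexp_neg_mul_Ioi hc) hF_top]
  simp [F]

noncomputable def rampExp : ℝ → ℂ := (Ioi 0).indicator fun t => t * cexp (-t)

lemma integrable_rampExp : Integrable rampExp := by
  have := integrableOn_ofReal_mul_cexp_neg_mul_Ioi (c := 1) (by simp)
  simp only [one_mul] at this
  exact (integrable_indicator_iff measurableSet_Ioi).2 this

lemma continuousAt_rampExp {t : ℝ} (ht : 0 < t) : ContinuousAt rampExp t :=
  (by fun_prop : Continuous fun t : ℝ => (t : ℂ) * cexp (-t)).continuousAt.congr <|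
    eventuallyEq_of_mem (Ioi_mem_nhds ht) fun _ hs => by rw [rampExp, indicator_of_mem hs]

lemma fourier_rampExp (ξ : ℝ) : 𝓕 rampExp ξ = 1 / (1 + 2 * π * ξ * I) ^ 2 := by
  have hre : 0 < (1 + 2 * π * ξ * I).re := by simp
  rw [Real.fourier_real_eq_integral_exp_smul, ← integral_ofReal_mul_cexp_neg_mul_Ioi hre,
    ← integral_indicator measurableSet_Ioi]
  congr 1 with v
  by_cases hv : v ∈ Ioi 0
  · simp only [rampExp, indicator_of_mem hv, smul_eq_mul]
    rw [mul_left_comm, ← Complex.exp_add]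
    push_cast
    ring_nf
  · simp [rampExp, hv]

lemma integrable_fourier_rampExp : Integrable (𝓕 rampExp) := by
  have hne : ∀ ξ : ℝ, 1 + 2 * π * ξ * I ≠ 0 := fun ξ h => by simpa using congrArg re h
  have hnorm : ∀ ξ : ℝ, ‖𝓕 rampExp ξ‖ = (1 + (2 * π * ξ) ^ 2)⁻¹ := fun ξ => by
    rw [fourier_rampExp, norm_div, norm_one, norm_pow, Complex.sq_norm, normSq_apply]
    simp
    ring
  refine Integrable.mono' ?_ ?_ (ae_of_all _ fun ξ => (hnorm ξ).le)
  · simpa using integrable_inv_one_add_sq.comp_mul_left' (two_pi_pos.ne')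
  · rw [funext fourier_rampExp]
    exact (continuous_const.div (by fun_prop) fun ξ => pow_ne_zero _ (hne ξ)).aestronglyMeasurable

lemma integral_cexp_one_add_I_mul_div_sq :
    ∫ s : ℝ, cexp (1 + I * s) / (1 + I * s) ^ 2 = 2 * (π : ℂ) := by
  set φ : ℝ → ℂ := fun s => cexp (s * I) / (1 + s * I) ^ 2
  have hinv : 𝓕⁻ (𝓕 rampExp) 1 = rampExp 1 :=
    integrable_rampExp.fourierInv_fourier_eq integrable_fourier_rampExp
      (continuousAt_rampExp one_pos)
  have hlhs : 𝓕⁻ (𝓕 rampExp) 1 = ∫ ξ : ℝ, φ (2 * π * ξ) := by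
    rw [Real.fourierInv_eq_fourier_neg, Real.fourier_real_eq_integral_exp_smul]
    congr 1 with ξ
    simp [φ, fourier_rampExp, div_eq_mul_inv]
  have hφ : ∫ s, φ s = 2 * π * cexp (-1) := by
    rw [hlhs, Measure.integral_comp_mul_left, abs_of_pos (inv_pos.2 two_pi_pos)] at hinv
    simp only [rampExp, indicator_of_mem (mem_Ioi.2 one_pos), ofReal_one, one_mul,
      real_smul] at hinv
    rw [← hinv]
    push_cast
    field_simp
  calc ∫ s : ℝ, cexp (1 + I * s) / (1 + I * s) ^ 2 = ∫ s, cexp 1 * φ s := by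
        congr 1 with s
        simp only [φ, Complex.exp_add, mul_comm I]
        ring
    _ = 2 * (π : ℂ) := by
        rw [integral_const_mul, hφ, mul_left_comm, ← Complex.exp_add]
        simp

theorem tendsto_integral_smul_of_tendsto_const {α ι 𝕜 E : Type*} [MeasurableSpace α]
    {μ : Measure α} {l : Filter ι} [l.IsCountablyGenerated] [RCLike 𝕜] [NormedAddCommGroup E]
    [NormedSpace ℝ E] [NormedSpace 𝕜 E] [CompleteSpace E] {w : α → 𝕜} (hw : Integrable w μ)
    {F : ι → α → E} {v : E} {C : ℝ} (hF_meas : ∀ᶠ i in l, AEStronglyMeasurable (F i) μ)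
    (hF_bound : ∀ᶠ i in l, ∀ᵐ a ∂μ, ‖F i a‖ ≤ C)
    (hF_lim : ∀ᵐ a ∂μ, Tendsto (fun i => F i a) l (𝓝 v)) :
    Tendsto (fun i => ∫ a, w a • F i a ∂μ) l (𝓝 ((∫ a, w a ∂μ) • v)) := by
  rw [← integral_smul_const]
  refine tendsto_integral_filter_of_dominated_convergence (fun a => ‖w a‖ * C)
    ?_ ?_ (hw.norm.mul_const C) ?_
  · filter_upwards [hF_meas] with i hi using hw.aestronglyMeasurable.smul hi
  · filter_upwards [hF_bound] with i hi
    filter_upwards [hi] with a ha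
    rw [norm_smul]
    exact mul_le_mul_of_nonneg_left ha (norm_nonneg _)
  · filter_upwards [hF_lim] with a ha using ha.const_smul (w a)

theorem contour_integral_tendsto_boundary_value_general
    {H : Type*} [NormedAddCommGroup H] [NormedSpace ℂ H] [CompleteSpace H]
    (G : ℂ → H) (k : ℝ) (γ C : ℝ) (hC : 0 < C)
    (hcont : ContinuousOn G {p : ℂ | 0 ≤ p.re})
    (hbound : ∀ p : ℂ, 0 ≤ p.re → ‖G p‖ ≤ C / (1 + ‖p‖ ^ γ))
    (hptwise : ∀ s : ℝ, Tendsto (fun t : ℝ => G ((1 + I * s) / t - I * k))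
        atTop (nhds (G (-(I * k))))) :
    Tendsto (fun t : ℝ =>
        (1 / (2 * (π : ℂ))) • ∫ s : ℝ,
          (Complex.exp (1 + I * s) / (1 + I * s) ^ 2) • G ((1 + I * s) / t - I * k))
      atTop (nhds (G (-(I * k)))) := by
  have hπ : (2 * π : ℂ) ≠ 0 := by exact_mod_cast two_pi_pos.ne'
  have hw := integral_cexp_one_add_I_mul_div_sq
  have hre : ∀ t : ℝ, 0 < t → ∀ s : ℝ, 0 ≤ ((1 + I * s) / t - I * k).re := fun t ht s => by
    simp [div_ofReal_re, ht.le]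
  -- the weight is integrable because its integral is nonzero (junk value `0` otherwise)
  have hlim := tendsto_integral_smul_of_tendsto_const (Integrable.of_integral_ne_zero (hw ▸ hπ))
    (F := fun (t s : ℝ) => G ((1 + I * s) / t - I * k)) (C := C) ?_ ?_ (ae_of_all _ hptwise)
  · have := (hw ▸ hlim).const_smul (1 / (2 * (π : ℂ)))
    rwa [smul_smul, one_div_mul_cancel hπ, one_smul] at this
  · filter_upwards [eventually_gt_atTop 0] with t ht
    exact (hcont.comp_continuous (by fun_prop) (hre t ht)).aestronglyMeasurable
  · filter_upwards [eventually_gt_atTop 0] with t ht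
    exact ae_of_all _ fun s => (hbound _ (hre t ht s)).trans
      (div_le_self hC.le (le_add_of_nonneg_right (by positivity)))

/-- Dominated convergence on the contour `Re q = 1`: under a decay bound on `G` and
pointwise convergence `G(q/t - ik) → G(-ik)`, the contour integral
`(1/(2πi)) ∫ G(q/t - ik) e^q q⁻² dq` tends to `G(-ik)`. -/
theorem contour_integral_tendsto_boundary_value
    {H : Type*} [NormedAddCommGroup H] [NormedSpace ℂ H] [CompleteSpace H]
    (G : ℂ → H) (k : ℝ) (γ C : ℝ) (hγ : 1 / 2 < γ) (hC : 0 < C)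
    (hcont : ContinuousOn G {p : ℂ | 0 ≤ p.re})
    (hbound : ∀ p : ℂ, 0 ≤ p.re → ‖G p‖ ≤ C / (1 + ‖p‖ ^ γ))
    (hptwise : ∀ s : ℝ, Tendsto (fun t : ℝ => G ((1 + I * s) / t - I * k))
        atTop (nhds (G (-(I * k))))) :
    Tendsto (fun t : ℝ =>
        (1 / (2 * (π : ℂ))) • ∫ s : ℝ,
          (Complex.exp (1 + I * s) / (1 + I * s) ^ 2) • G ((1 + I * s) / t - I * k))
      atTop (nhds (G (-(I * k)))) :=
  contour_integral_tendsto_boundary_value_general G k γ C hC hcont hbound hptwise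
end

section
/- Let b₁,...,b_M be elements of a Banach space H, not all zero, and κ₁,...,κ_M distinct complex numbers with Re κ_m > 0. Then there exist c > 0 and δ > 0 such that ‖Σ_{m=1}^M b_m e^{κ_m t}‖ ≥ c e^{δ t} along a sequence t_n → ∞; in particular (1/t)‖∫₀ᵗ Σ_m b_m e^{κ_m s} ds‖ → ∞ along a sequence t_n → ∞. -/
/-!
Among the modes with `b m ≠ 0` pick one, `j`, whose exponent has maximal real part, and divide
the sum by `exp (κ j t)`. What remains is the constant `b j` plus modes `exp ((κ m - κ j) t)`
that neither grow nor are constant, so their integrals over any `[T, 2T]` stay bounded by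
`2 / ‖κ m - κ j‖`, while the constant integrates to `T • b j`. Hence the mean over `[T, 2T]` has
norm close to `‖b j‖` for large `T`, and the normalized sum must exceed `‖b j‖ / 2` somewhere in
that interval. The integral `∫₀ᵗ` is again such a sum (with coefficients `b m / κ m`) minus a
constant, so it grows exponentially along the same sequence.
-/

open Filter Complex MeasureTheory

section

variable {E : Type*} [NormedAddCommGroup E] [NormedSpace ℂ E]

lemma norm_cexp_mul_ofReal (z : ℂ) (t : ℝ) : ‖cexp (z * t)‖ = Real.exp (z.re * t) := by
  rw [norm_exp, re_mul_ofReal]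

lemma norm_integral_cexp_mul_le {z : ℂ} (hz : z ≠ 0) (hre : z.re ≤ 0) {a b : ℝ}
    (ha : 0 ≤ a) (hb : 0 ≤ b) : ‖∫ t in a..b, cexp (z * t)‖ ≤ 2 / ‖z‖ := by
  have hle_one : ∀ t : ℝ, 0 ≤ t → ‖cexp (z * t)‖ ≤ 1 := fun t ht => by
    rw [norm_cexp_mul_ofReal]
    exact Real.exp_le_one_iff.mpr (mul_nonpos_of_nonpos_of_nonneg hre ht)
  rw [integral_exp_mul_complex hz, norm_div]
  gcongr
  calc ‖cexp (z * b) - cexp (z * a)‖ ≤ ‖cexp (z * b)‖ + ‖cexp (z * a)‖ := norm_sub_le _ _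
    _ ≤ 2 := by linarith [hle_one b hb, hle_one a ha]

lemma exists_mem_uIoc_lt_norm_of_lt_norm_integral {f : ℝ → E} {a b ε : ℝ}
    (h : ε * |b - a| < ‖∫ t in a..b, f t‖) : ∃ t ∈ Set.uIoc a b, ε < ‖f t‖ := by
  by_contra! hf
  exact (intervalIntegral.norm_integral_le_of_norm_le_const hf).not_gt h

variable [CompleteSpace E] {ι : Type*}

lemma norm_integral_const_add_sum_cexp_ge (a₀ : E) (s : Finset ι) (v : ι → E) (κ : ι → ℂ)
    (hκ : ∀ m ∈ s, κ m ≠ 0 ∧ (κ m).re ≤ 0) {T : ℝ} (hT : 0 ≤ T) :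
    ‖a₀‖ * T - ∑ m ∈ s, 2 * ‖v m‖ / ‖κ m‖ ≤
      ‖∫ t in T..2 * T, (a₀ + ∑ m ∈ s, cexp (κ m * t) • v m)‖ := by
  have hint : ∀ m ∈ s, IntervalIntegrable (fun t : ℝ => cexp (κ m * t) • v m) volume T (2 * T) :=
    fun m _ => (by fun_prop : Continuous fun t : ℝ => cexp (κ m * t) • v m).intervalIntegrable _ _
  have hsplit : ∫ t in T..2 * T, (a₀ + ∑ m ∈ s, cexp (κ m * t) • v m) =
      T • a₀ + ∑ m ∈ s, (∫ t in T..2 * T, cexp (κ m * t)) • v m := by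
    rw [intervalIntegral.integral_add intervalIntegrable_const ((by fun_prop :
        Continuous fun t : ℝ => ∑ m ∈ s, cexp (κ m * t) • v m).intervalIntegrable _ _),
      intervalIntegral.integral_const, intervalIntegral.integral_finsetSum hint]
    simp only [intervalIntegral.integral_smul_const]
    ring_nf
  have hrest : ‖∑ m ∈ s, (∫ t in T..2 * T, cexp (κ m * t)) • v m‖ ≤
      ∑ m ∈ s, 2 * ‖v m‖ / ‖κ m‖ := by
    refine (norm_sum_le _ _).trans (Finset.sum_le_sum fun m hm => ?_)
    rw [norm_smul, mul_div_right_comm]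
    gcongr
    exact norm_integral_cexp_mul_le (hκ m hm).1 (hκ m hm).2 hT (by linarith)
  rw [hsplit]
  have htriangle := norm_sub_le_norm_add (T • a₀) (∑ m ∈ s, (∫ t in T..2 * T, cexp (κ m * t)) • v m)
  rw [norm_smul, Real.norm_of_nonneg hT] at htriangle
  linarith

lemma frequently_half_norm_lt_norm_const_add_sum_cexp {a₀ : E} (ha₀ : a₀ ≠ 0) (s : Finset ι)
    (v : ι → E) (κ : ι → ℂ) (hκ : ∀ m ∈ s, κ m ≠ 0 ∧ (κ m).re ≤ 0) :
    ∃ᶠ t : ℝ in atTop, ‖a₀‖ / 2 < ‖a₀ + ∑ m ∈ s, cexp (κ m * t) • v m‖ := by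
  rw [frequently_atTop]
  intro N
  set C := ∑ m ∈ s, 2 * ‖v m‖ / ‖κ m‖
  have ha₀ : 0 < ‖a₀‖ := norm_pos_iff.mpr ha₀
  have hC : 0 ≤ C := Finset.sum_nonneg fun m _ => by positivity
  set T := max N (2 * C / ‖a₀‖ + 1)
  have hT : 0 ≤ T := le_max_of_le_right (by positivity)
  have hCT : 2 * C < ‖a₀‖ * T := by
    have : 2 * C / ‖a₀‖ < T := by linarith [le_max_right N (2 * C / ‖a₀‖ + 1)]
    rw [div_lt_iff₀ ha₀] at this
    linarith
  obtain ⟨t, ht, hlt⟩ := exists_mem_uIoc_lt_norm_of_lt_norm_integral (ε := ‖a₀‖ / 2)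
    (f := fun t : ℝ => a₀ + ∑ m ∈ s, cexp (κ m * t) • v m) (a := T) (b := 2 * T) <| by
      rw [show 2 * T - T = T by ring, abs_of_nonneg hT]
      linarith [norm_integral_const_add_sum_cexp_ge a₀ s v κ hκ hT]
  rw [Set.uIoc_of_le (by linarith)] at ht
  exact ⟨t, (le_max_left _ _).trans ht.1.le, hlt⟩

lemma exists_frequently_lt_norm_sum_cexp_smul [Fintype ι] {v : ι → E} (hv : ∃ m, v m ≠ 0)
    {κ : ι → ℂ} (hκ : Function.Injective κ) :
    ∃ j, v j ≠ 0 ∧ ∃ᶠ t : ℝ in atTop,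
      ‖v j‖ / 2 * Real.exp ((κ j).re * t) < ‖∑ m, cexp (κ m * t) • v m‖ := by
  classical
  obtain ⟨j, hj, hmax⟩ := Finset.exists_max_image {m | v m ≠ 0} (fun m => (κ m).re)
    (by simpa [Finset.Nonempty] using hv)
  have hvj : v j ≠ 0 := by simpa using hj
  set s := ({m | v m ≠ 0} : Finset ι).erase j
  have hdecomp : ∀ t : ℝ, ∑ m, cexp (κ m * t) • v m =
      cexp (κ j * t) • (v j + ∑ m ∈ s, cexp ((κ m - κ j) * t) • v m) := by
    intro t
    rw [← Finset.sum_subset (Finset.subset_univ {m | v m ≠ 0}) fun m _ hm => by simp_all,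
      ← Finset.add_sum_erase _ _ hj, smul_add, Finset.smul_sum]
    congr 1
    refine Finset.sum_congr rfl fun m _ => ?_
    rw [smul_smul, ← Complex.exp_add]
    ring_nf
  refine ⟨j, hvj, (frequently_half_norm_lt_norm_const_add_sum_cexp hvj s v (κ · - κ j)
    fun m hm => ?_).mono fun t ht => ?_⟩
  · obtain ⟨hmj, hm⟩ := Finset.mem_erase.mp hm
    exact ⟨sub_ne_zero.mpr (hκ.ne hmj), by simpa using hmax m hm⟩
  · rw [hdecomp, norm_smul, norm_cexp_mul_ofReal, mul_comm]
    exact mul_lt_mul_of_pos_left ht (Real.exp_pos _)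

lemma integral_sum_cexp_smul [Fintype ι] (v : ι → E) {κ : ι → ℂ} (hκ : ∀ m, κ m ≠ 0) (T : ℝ) :
    ∫ s in (0 : ℝ)..T, ∑ m, cexp (κ m * s) • v m =
      ∑ m, cexp (κ m * T) • (κ m)⁻¹ • v m - ∑ m, (κ m)⁻¹ • v m := by
  rw [intervalIntegral.integral_finsetSum fun m _ =>
    (by fun_prop : Continuous fun s : ℝ => cexp (κ m * s) • v m).intervalIntegrable _ _,
    ← Finset.sum_sub_distrib]
  refine Finset.sum_congr rfl fun m _ => ?_
  rw [intervalIntegral.integral_smul_const, integral_exp_mul_complex (hκ m), smul_smul,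
    ← sub_smul]
  simp [sub_mul, div_eq_mul_inv]

end

lemma tendsto_mul_exp_sub_div_atTop {c δ : ℝ} (hc : 0 < c) (hδ : 0 < δ) (K : ℝ) :
    Tendsto (fun x => (c * Real.exp (δ * x) - K) / x) atTop atTop := by
  have hexp : Tendsto (fun x => c * (Real.exp (δ * x) / x)) atTop atTop := by
    simpa using (tendsto_exp_mul_div_rpow_atTop 1 δ hδ).const_mul_atTop hc
  have hinv : Tendsto (fun x : ℝ => -K * x⁻¹) atTop (nhds 0) := by
    simpa using tendsto_inv_atTop_zero.const_mul (-K)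
  refine (hexp.atTop_add hinv).congr' ?_
  filter_upwards [eventually_ne_atTop 0] with x hx
  field_simp
  ring

/-- A nontrivial combination `Σ b_m e^{κ_m t}` of exponentials with distinct exponents
of positive real part grows at least like `c e^{δt}` along a sequence `t_n → ∞`; in
particular `(1/t)‖∫₀ᵗ Σ b_m e^{κ_m s} ds‖ → ∞` along a sequence. -/
theorem growing_exponential_modes_not_all_zero
    {H : Type*} [NormedAddCommGroup H] [NormedSpace ℂ H] [CompleteSpace H]
    (M : ℕ) (b : Fin M → H) (hb : ∃ m, b m ≠ 0)
    (κ : Fin M → ℂ) (hκpos : ∀ m, 0 < (κ m).re) (hκinj : Function.Injective κ) :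
    (∃ c > (0:ℝ), ∃ δ > (0:ℝ), ∃ t' : ℕ → ℝ, Tendsto t' atTop atTop ∧
      ∀ n, c * Real.exp (δ * t' n) ≤ ‖∑ m, Complex.exp (κ m * t' n) • b m‖) ∧
    (∃ s' : ℕ → ℝ, Tendsto s' atTop atTop ∧
      Tendsto (fun n => (1 / s' n) * ‖∫ s in (0:ℝ)..(s' n), ∑ m, Complex.exp (κ m * s) • b m‖)
        atTop atTop) := by
  have growth : ∀ v : Fin M → H, (∃ m, v m ≠ 0) → ∃ c > (0:ℝ), ∃ δ > (0:ℝ), ∃ t' : ℕ → ℝ,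
      Tendsto t' atTop atTop ∧ ∀ n, c * Real.exp (δ * t' n) ≤ ‖∑ m, cexp (κ m * t' n) • v m‖ := by
    intro v hv
    obtain ⟨j, hvj, hfreq⟩ := exists_frequently_lt_norm_sum_cexp_smul hv hκinj
    obtain ⟨t', ht', hlt⟩ := exists_seq_forall_of_frequently hfreq
    exact ⟨_, half_pos (norm_pos_iff.mpr hvj), _, hκpos j, t', ht', fun n => (hlt n).le⟩
  refine ⟨growth b hb, ?_⟩
  have hκ : ∀ m, κ m ≠ 0 := fun m h => by simpa [h] using hκpos m
  obtain ⟨c, hc, δ, hδ, t', ht', hle⟩ :=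
    growth (fun m => (κ m)⁻¹ • b m) (hb.imp fun m => smul_ne_zero (inv_ne_zero (hκ m)))
  refine ⟨t', ht', tendsto_atTop_mono' _ ?_
    ((tendsto_mul_exp_sub_div_atTop hc hδ ‖∑ m, (κ m)⁻¹ • b m‖).comp ht')⟩
  filter_upwards [ht'.eventually_gt_atTop 0] with n hn
  rw [integral_sum_cexp_smul b hκ, one_div_mul_eq_div]
  simp only [Function.comp_apply]
  gcongr
  linarith [hle n, norm_sub_norm_le (∑ m, cexp (κ m * t' n) • (κ m)⁻¹ • b m) (∑ m, (κ m)⁻¹ • b m)]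
end
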